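/- arXiv:math/0104081 — 2 statements merged into one kernel-verified Lean document; each statement's English description precedes it below -/
import Mathlib

section
/- Let n ≥ 1 be a natural number and z ∈ ℂ. The φ-distance from 0 to z equals |z|^{n+1}/(n+1): the infimum over all C¹ paths γ : [0,1] → ℂ with γ(0) = 0 and γ(1) = z of ∫₀¹ |γ(t)|ⁿ ‖γ'(t)‖ dt equals |z|^{n+1}/(n+1), and it is attained by the radial segment γ(t) = t·z. In particular, the radii centered at the zero are φ-geodesic arcs. -/
/-! Test a path `γ` from `0` to `z` against a norm-one functional `f` with `f z = ‖z‖`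
(Hahn–Banach). Since `|f ∘ γ| ≤ ‖γ‖` and `|(f ∘ γ)'| ≤ ‖γ'‖`, the `φ`-length of `γ` is at least
`∫ (f ∘ γ)ⁿ (f ∘ γ)' = (f z)ⁿ⁺¹/(n+1) = ‖z‖ⁿ⁺¹/(n+1)`, and the radial segment attains this value. -/

open intervalIntegral

section PhiLength

variable {E : Type*} [NormedAddCommGroup E] [NormedSpace ℝ E]

noncomputable def phiLength (n : ℕ) (γ : ℝ → E) (a b : ℝ) : ℝ :=
  ∫ t in a..b, ‖γ t‖ ^ n * ‖deriv γ t‖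

theorem pow_mul_le_pow_mul_of_abs_le {x y X Y : ℝ} (n : ℕ) (hx : |x| ≤ X) (hy : |y| ≤ Y) :
    x ^ n * y ≤ X ^ n * Y :=
  calc x ^ n * y ≤ |x ^ n * y| := le_abs_self _
    _ = |x| ^ n * |y| := by rw [abs_mul, abs_pow]
    _ ≤ X ^ n * Y := mul_le_mul (pow_le_pow_left₀ (abs_nonneg x) hx n) hy (abs_nonneg y)
        (pow_nonneg ((abs_nonneg x).trans hx) n)

theorem sub_norm_pow_succ_div_le_phiLength (n : ℕ) {γ : ℝ → E} (hγ : ContDiff ℝ 1 γ)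
    {a b : ℝ} (hab : a ≤ b) :
    (‖γ b‖ ^ (n + 1) - ‖γ a‖ ^ (n + 1)) / (n + 1) ≤ phiLength n γ a b := by
  obtain ⟨f, hf, hfb⟩ := exists_dual_vector'' ℝ (γ b)
  have hf_abs : ∀ x, |f x| ≤ ‖x‖ := fun x => by simpa using f.le_of_opNorm_le hf x
  have hderiv : ∀ t, HasDerivAt (f ∘ γ) (f (deriv γ t)) t := fun t =>
    f.hasFDerivAt.comp_hasDerivAt t (hγ.differentiable one_ne_zero t).hasDerivAt
  have hγ' : Continuous (deriv γ) := hγ.continuous_deriv le_rfl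
  calc (‖γ b‖ ^ (n + 1) - ‖γ a‖ ^ (n + 1)) / (n + 1)
      ≤ (f (γ b) ^ (n + 1) - f (γ a) ^ (n + 1)) / (n + 1) := by
        have ha : f (γ a) ^ (n + 1) ≤ ‖γ a‖ ^ (n + 1) := by
          simpa using pow_mul_le_pow_mul_of_abs_le (n + 1) (hf_abs (γ a)) abs_one.le
        rw [hfb, RCLike.ofReal_real_eq_id, id]
        gcongr
    _ = ∫ t in a..b, (f ∘ γ) t ^ n * f (deriv γ t) :=
        ((integral_comp_mul_deriv (fun t _ => hderiv t) (f.continuous.comp hγ').continuousOn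
          (continuous_pow n)).trans (integral_pow n)).symm
    _ ≤ phiLength n γ a b := by
        refine integral_mono_on hab ?_ ?_ fun t _ =>
          pow_mul_le_pow_mul_of_abs_le n (hf_abs (γ t)) (hf_abs (deriv γ t))
        · exact (((f.continuous.comp hγ.continuous).pow n).mul
            (f.continuous.comp hγ')).intervalIntegrable a b
        · exact ((hγ.continuous.norm.pow n).mul hγ'.norm).intervalIntegrable a b

theorem phiLength_smul_const (n : ℕ) (z : E) :
    phiLength n (fun s : ℝ => s • z) 0 1 = ‖z‖ ^ (n + 1) / (n + 1) := by
  have hderiv : ∀ t, deriv (fun s : ℝ => s • z) t = z := fun t => by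
    simpa using ((hasDerivAt_id t).smul_const z).deriv
  calc phiLength n (fun s : ℝ => s • z) 0 1 = ∫ t in (0 : ℝ)..1, ‖z‖ ^ (n + 1) * t ^ n := by
        refine integral_congr fun t ht => ?_
        rw [Set.uIcc_of_le zero_le_one] at ht
        simp only [hderiv, norm_smul, Real.norm_of_nonneg ht.1]
        ring
    _ = ‖z‖ ^ (n + 1) / (n + 1) := by
        rw [integral_const_mul, integral_pow]
        ring

end PhiLength

theorem phi_distance_from_zero_general (n : ℕ) (z : ℂ) :
    sInf {L : ℝ | ∃ γ : ℝ → ℂ, ContDiff ℝ 1 γ ∧ γ 0 = 0 ∧ γ 1 = z ∧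
        L = ∫ t in (0:ℝ)..1, ‖γ t‖ ^ n * ‖deriv γ t‖} =
      ‖z‖ ^ (n + 1) / (n + 1) ∧
    (∫ t in (0:ℝ)..1,
        ‖(t : ℂ) * z‖ ^ n * ‖deriv (fun s : ℝ => (s : ℂ) * z) t‖) =
      ‖z‖ ^ (n + 1) / (n + 1) := by
  have hradial : (∫ t in (0:ℝ)..1,
      ‖(t : ℂ) * z‖ ^ n * ‖deriv (fun s : ℝ => (s : ℂ) * z) t‖) = ‖z‖ ^ (n + 1) / (n + 1) := by
    simpa only [phiLength, Complex.real_smul] using phiLength_smul_const n z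
  refine ⟨IsLeast.csInf_eq ⟨⟨_, ?_, by simp, by simp, hradial.symm⟩, ?_⟩, hradial⟩
  · exact Complex.ofRealCLM.contDiff.mul contDiff_const
  · rintro _ ⟨γ, hγ, h0, h1, rfl⟩
    simpa [h0, h1, phiLength] using sub_norm_pow_succ_div_le_phiLength n hγ zero_le_one

/-- For `n ≥ 1` and `z ∈ ℂ`, the `φ`-distance from `0` to `z` equals
`|z|^{n+1}/(n+1)`: the infimum of `φ`-lengths of `C¹` paths from `0` to `z` equals
`|z|^{n+1}/(n+1)`, and it is attained by the radial segment `γ(t) = t·z`. -/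
theorem phi_distance_from_zero (n : ℕ) (hn : 1 ≤ n) (z : ℂ) :
    sInf {L : ℝ | ∃ γ : ℝ → ℂ, ContDiff ℝ 1 γ ∧ γ 0 = 0 ∧ γ 1 = z ∧
        L = ∫ t in (0:ℝ)..1, ‖γ t‖ ^ n * ‖deriv γ t‖} =
      ‖z‖ ^ (n + 1) / (n + 1) ∧
    (∫ t in (0:ℝ)..1,
        ‖(t : ℂ) * z‖ ^ n * ‖deriv (fun s : ℝ => (s : ℂ) * z) t‖) =
      ‖z‖ ^ (n + 1) / (n + 1) :=
  phi_distance_from_zero_general n z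
end

section
/- Let C be a nonzero real number, let 0 < u₁ ≤ u₂, and set z₁ = u₁ + iC/u₁ and z₂ = u₂ + iC/u₂. Then: (1) every C¹ path γ : [0,1] → ℂ with γ(0) = z₁ and γ(1) = z₂ satisfies ∫₀¹ |γ(t)| ‖γ'(t)‖ dt ≥ |z₁² − z₂²|/2; and (2) the hyperbola arc γ(t) = t + iC/t for t ∈ [u₁, u₂] joins z₁ to z₂ and has length ∫_{u₁}^{u₂} |γ(t)| ‖γ'(t)‖ dt exactly equal to |z₁² − z₂²|/2. Consequently the arc of the hyperbola v = C/u between z₁ and z₂ is a shortest path in the conformal metric with density |z|. -/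
/-!
The density `|z|` is the pull-back of the Euclidean metric under `z ↦ z²/2`:
`|z| |dz| = |d(z²/2)|`. Hence the length of any path is at least the distance between the endpoints' images under
`z ↦ z²/2`, with equality when `γ γ'` keeps a constant direction. On the hyperbola
`t + iC/t` one has `z² = t² - C²/t² + 2iC`, whose imaginary part is constant, and indeed
`γ γ' = t + C²/t³ > 0` there.
-/

open Complex Set intervalIntegral
open scoped ComplexOrder

section PathIntegral

variable {γ γ' : ℝ → ℂ} {a b : ℝ}

theorem integral_mul_eq_sq_sub_sq (hγ : ∀ t ∈ uIcc a b, HasDerivAt γ (γ' t) t)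
    (hγ' : ContinuousOn γ' (uIcc a b)) :
    ∫ t in a..b, γ t * γ' t = (γ b ^ 2 - γ a ^ 2) / 2 := by
  have hderiv : ∀ t ∈ uIcc a b, HasDerivAt (fun s => γ s ^ 2 / 2) (γ t * γ' t) t :=
    fun t ht ↦ (((hγ t ht).pow 2).div_const 2).congr_deriv (by push_cast; ring)
  have hcont : ContinuousOn γ (uIcc a b) :=
    fun t ht ↦ (hγ t ht).continuousAt.continuousWithinAt
  rw [integral_eq_sub_of_hasDerivAt hderiv ((hcont.mul hγ').intervalIntegrable)]
  ring

theorem norm_sq_sub_sq_div_two_le_integral (hab : a ≤ b)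
    (hγ : ∀ t ∈ uIcc a b, HasDerivAt γ (γ' t) t) (hγ' : ContinuousOn γ' (uIcc a b)) :
    ‖γ b ^ 2 - γ a ^ 2‖ / 2 ≤ ∫ t in a..b, ‖γ t‖ * ‖γ' t‖ :=
  calc ‖γ b ^ 2 - γ a ^ 2‖ / 2 = ‖∫ t in a..b, γ t * γ' t‖ := by
        rw [integral_mul_eq_sq_sub_sq hγ hγ', norm_div, Complex.norm_two]
    _ ≤ ∫ t in a..b, ‖γ t * γ' t‖ := norm_integral_le_integral_norm hab
    _ = ∫ t in a..b, ‖γ t‖ * ‖γ' t‖ := by simp only [norm_mul]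

theorem integral_norm_mul_norm_eq_of_nonneg (hab : a ≤ b)
    (hγ : ∀ t ∈ uIcc a b, HasDerivAt γ (γ' t) t) (hγ' : ContinuousOn γ' (uIcc a b))
    (hnonneg : ∀ t ∈ uIcc a b, 0 ≤ γ t * γ' t) :
    ∫ t in a..b, ‖γ t‖ * ‖γ' t‖ = ‖γ b ^ 2 - γ a ^ 2‖ / 2 := by
  set L := ∫ t in a..b, ‖γ t‖ * ‖γ' t‖
  have hL : (L : ℂ) = (γ b ^ 2 - γ a ^ 2) / 2 := by
    rw [← integral_mul_eq_sq_sub_sq hγ hγ', ← intervalIntegral.integral_ofReal]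
    refine integral_congr fun t ht ↦ ?_
    simp only [← norm_mul, norm_of_nonneg' (hnonneg t ht)]
  have hL_nonneg : 0 ≤ L := integral_nonneg hab fun t _ ↦ by positivity
  rw [← Complex.norm_two, ← norm_div, ← hL, Complex.norm_real, Real.norm_of_nonneg hL_nonneg]

end PathIntegral

theorem hasDerivAt_hyperbola (C : ℝ) {t : ℝ} (ht : t ≠ 0) :
    HasDerivAt (fun s : ℝ => (s : ℂ) + I * ((C / s : ℝ) : ℂ))
      (1 - I * ((C / t ^ 2 : ℝ) : ℂ)) t := by
  have hdiv : HasDerivAt (fun s : ℝ => C / s) (-(C / t ^ 2)) t := by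
    simpa [div_eq_mul_inv, neg_div, mul_comm] using (hasDerivAt_inv ht).const_mul C
  refine ((hasDerivAt_id t).ofReal_comp.add (hdiv.ofReal_comp.const_mul I)).congr_deriv ?_
  push_cast
  ring

theorem hyperbola_mul_deriv (C : ℝ) {t : ℝ} (ht : t ≠ 0) :
    ((t : ℂ) + I * ((C / t : ℝ) : ℂ)) * (1 - I * ((C / t ^ 2 : ℝ) : ℂ)) =
      ((t + C ^ 2 / t ^ 3 : ℝ) : ℂ) := by
  have htc : (t : ℂ) ≠ 0 := ofReal_ne_zero.mpr ht
  push_cast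
  field_simp
  ring_nf
  simp only [I_sq]
  ring

theorem hyperbola_arc_is_shortest_general (C : ℝ) (u₁ u₂ : ℝ)
    (hu₁ : 0 < u₁) (hu : u₁ ≤ u₂) (z₁ z₂ : ℂ)
    (hz₁ : z₁ = (u₁ : ℂ) + Complex.I * ((C / u₁ : ℝ) : ℂ))
    (hz₂ : z₂ = (u₂ : ℂ) + Complex.I * ((C / u₂ : ℝ) : ℂ)) :
    (∀ γ : ℝ → ℂ, ContDiff ℝ 1 γ → γ 0 = z₁ → γ 1 = z₂ →
        (∫ t in (0:ℝ)..1, ‖γ t‖ * ‖deriv γ t‖) ≥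
          ‖z₁ ^ 2 - z₂ ^ 2‖ / 2) ∧
    ((fun t : ℝ => (t : ℂ) + Complex.I * ((C / t : ℝ) : ℂ)) u₁ = z₁ ∧
      (fun t : ℝ => (t : ℂ) + Complex.I * ((C / t : ℝ) : ℂ)) u₂ = z₂ ∧
      (∫ t in u₁..u₂,
          ‖(t : ℂ) + Complex.I * ((C / t : ℝ) : ℂ)‖ *
            ‖deriv (fun s : ℝ => (s : ℂ) + Complex.I * ((C / s : ℝ) : ℂ)) t‖) =
        ‖z₁ ^ 2 - z₂ ^ 2‖ / 2) := by
  refine ⟨fun γ hγ h0 h1 ↦ ?_, hz₁.symm, hz₂.symm, ?_⟩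
  · rw [← h0, ← h1, norm_sub_rev]
    exact norm_sq_sub_sq_div_two_le_integral zero_le_one
      (fun t _ ↦ (hγ.differentiable one_ne_zero t).hasDerivAt)
      (hγ.continuous_deriv le_rfl).continuousOn
  · have hpos : ∀ t ∈ uIcc u₁ u₂, 0 < t := fun t ht ↦
      hu₁.trans_le (uIcc_of_le hu ▸ ht).1
    have hderiv := fun t ht ↦ hasDerivAt_hyperbola C (hpos t ht).ne'
    refine (integral_congr fun t ht ↦ ?_).trans
      ((integral_norm_mul_norm_eq_of_nonneg hu hderiv ?_ ?_).trans
        (by rw [norm_sub_rev, hz₁, hz₂]))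
    · simp only [(hderiv t ht).deriv]
    · exact ContinuousOn.sub continuousOn_const <| continuousOn_const.mul <|
        continuous_ofReal.comp_continuousOn <| continuousOn_const.div (continuousOn_pow 2)
          fun t ht ↦ pow_ne_zero 2 (hpos t ht).ne'
    · intro t ht
      rw [hyperbola_mul_deriv C (hpos t ht).ne', zero_le_real]
      have ht₀ := hpos t ht
      positivity

/-- For a nonzero real `C`, `0 < u₁ ≤ u₂`, `z₁ = u₁ + iC/u₁`,
`z₂ = u₂ + iC/u₂`: (1) every `C¹` path `γ` from `z₁` to `z₂` has `φ`-length (density `|z|`)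
at least `|z₁² − z₂²|/2`; (2) the hyperbola arc `t ↦ t + iC/t`, `t ∈ [u₁, u₂]`, joins
`z₁` to `z₂` and has `φ`-length exactly `|z₁² − z₂²|/2`. Hence the hyperbola arc is a
shortest path for the conformal metric with density `|z|`. -/
theorem hyperbola_arc_is_shortest (C : ℝ) (hC : C ≠ 0) (u₁ u₂ : ℝ)
    (hu₁ : 0 < u₁) (hu : u₁ ≤ u₂) (z₁ z₂ : ℂ)
    (hz₁ : z₁ = (u₁ : ℂ) + Complex.I * ((C / u₁ : ℝ) : ℂ))
    (hz₂ : z₂ = (u₂ : ℂ) + Complex.I * ((C / u₂ : ℝ) : ℂ)) :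
    (∀ γ : ℝ → ℂ, ContDiff ℝ 1 γ → γ 0 = z₁ → γ 1 = z₂ →
        (∫ t in (0:ℝ)..1, ‖γ t‖ * ‖deriv γ t‖) ≥
          ‖z₁ ^ 2 - z₂ ^ 2‖ / 2) ∧
    ((fun t : ℝ => (t : ℂ) + Complex.I * ((C / t : ℝ) : ℂ)) u₁ = z₁ ∧
      (fun t : ℝ => (t : ℂ) + Complex.I * ((C / t : ℝ) : ℂ)) u₂ = z₂ ∧
      (∫ t in u₁..u₂,
          ‖(t : ℂ) + Complex.I * ((C / t : ℝ) : ℂ)‖ *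
            ‖deriv (fun s : ℝ => (s : ℂ) + Complex.I * ((C / s : ℝ) : ℂ)) t‖) =
        ‖z₁ ^ 2 - z₂ ^ 2‖ / 2) :=
  hyperbola_arc_is_shortest_general C u₁ u₂ hu₁ hu z₁ z₂ hz₁ hz₂
end
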